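/- The set of stable matchings of any instance, ordered by the men's dominance relation, forms a lattice: every pair of stable matchings has a least upper bound and a greatest lower bound within the set of stable matchings. -/

import Mathlib

open Finset

/-- A stable matching instance: `n` men and `n` women; `mrank m w` is the
(0-indexed) rank of woman `w` in man `m`'s strict preference list (lower = more
preferred); `wrank w m` analogously. -/
structure SMInstance (n : ℕ) where
  mrank : Fin n → Fin n → Fin n
  wrank : Fin n → Fin n → Fin n
  mbij : ∀ m, Function.Bijective (mrank m)
  wbij : ∀ w, Function.Bijective (wrank w)

namespace SMInstance

variable {n : ℕ}

/-- `(m, w)` is a blocking pair of the perfect matching `μ`. -/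
def Blocking (I : SMInstance n) (μ : Equiv.Perm (Fin n)) (m w : Fin n) : Prop :=
  μ m ≠ w ∧ I.mrank m w < I.mrank m (μ m) ∧ I.wrank w m < I.wrank w (μ.symm w)

/-- A matching is stable if it admits no blocking pair. -/
def Stable (I : SMInstance n) (μ : Equiv.Perm (Fin n)) : Prop :=
  ∀ m w, ¬ I.Blocking μ m w

/-- Total (1-indexed) rank of partners over men. -/
def SM (I : SMInstance n) (μ : Equiv.Perm (Fin n)) : ℤ :=
  ∑ m : Fin n, (((I.mrank m (μ m) : ℕ) : ℤ) + 1)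

/-- Total (1-indexed) rank of partners over women. -/
def SW (I : SMInstance n) (μ : Equiv.Perm (Fin n)) : ℤ :=
  ∑ w : Fin n, (((I.wrank w (μ.symm w) : ℕ) : ℤ) + 1)

/-- The sex-equality cost of a matching. -/
def cost (I : SMInstance n) (μ : Equiv.Perm (Fin n)) : ℤ :=
  |I.SM μ - I.SW μ|

end SMInstance

/-- `μ'` dominates `μ` for the men: every man weakly prefers his partner in `μ'`. -/
def Dominates {n : ℕ} (I : SMInstance n) (μ' μ : Equiv.Perm (Fin n)) : Prop :=
  ∀ m : Fin n, I.mrank m (μ' m) ≤ I.mrank m (μ m)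
/-! Let `σ` give every man the better and `τ` the worse of his two partners. If `σ` sent two men
to the same woman `w`, each would strictly prefer her to his other partner, and whichever of the
two `w` prefers would form with her a pair that blocks one of the two matchings; so `σ` is a
matching, and a pair blocking `σ` would block the matching from which the woman took her
`σ`-partner. For `τ`, stability forces opposite interests: a man and a woman matched in `μ₁` who
both weakly prefer `μ₁` to `μ₂` are matched in `μ₂` too. Hence `τ` is the inverse of the
women's join, and is a stable matching by the first part with the sexes exchanged. -/

namespace SMInstance

variable {n : ℕ} (I : SMInstance n)

lemma blocking_iff {μ : Equiv.Perm (Fin n)} {m w : Fin n} :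
    I.Blocking μ m w ↔ I.mrank m w < I.mrank m (μ m) ∧ I.wrank w m < I.wrank w (μ.symm w) :=
  ⟨fun h => h.2, fun h => ⟨fun hmw => (hmw ▸ h.1).false, h⟩⟩

lemma stable_iff {μ : Equiv.Perm (Fin n)} :
    I.Stable μ ↔
      ∀ m w, ¬ (I.mrank m w < I.mrank m (μ m) ∧ I.wrank w m < I.wrank w (μ.symm w)) := by
  simp only [Stable, blocking_iff]

variable {I}

lemma Stable.apply_eq_of_le {μ : Equiv.Perm (Fin n)} (hμ : I.Stable μ) {m w : Fin n}
    (hm : I.mrank m w ≤ I.mrank m (μ m)) (hw : I.wrank w m ≤ I.wrank w (μ.symm w)) :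
    μ m = w := by
  by_contra hne
  have hne' : μ.symm w ≠ m := fun h => hne (by rw [← h, Equiv.apply_symm_apply])
  exact (I.stable_iff.1 hμ) m w
    ⟨hm.lt_of_ne fun h => hne ((I.mbij m).1 h).symm,
      hw.lt_of_ne fun h => hne' ((I.wbij w).1 h).symm⟩

variable (I)

def swap : SMInstance n := ⟨I.wrank, I.mrank, I.wbij, I.mbij⟩

lemma stable_swap_symm_iff {μ : Equiv.Perm (Fin n)} : I.swap.Stable μ.symm ↔ I.Stable μ := by
  simp only [stable_iff, swap, Equiv.symm_symm]
  rw [forall_comm]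
  exact forall₂_congr fun _ _ => not_congr and_comm

variable {I} in
lemma Stable.swap_symm {μ : Equiv.Perm (Fin n)} (h : I.Stable μ) : I.swap.Stable μ.symm :=
  I.stable_swap_symm_iff.2 h

def better (μ₁ μ₂ : Equiv.Perm (Fin n)) (m : Fin n) : Fin n :=
  if I.mrank m (μ₁ m) ≤ I.mrank m (μ₂ m) then μ₁ m else μ₂ m

def worse (μ₁ μ₂ : Equiv.Perm (Fin n)) (m : Fin n) : Fin n :=
  if I.mrank m (μ₁ m) ≤ I.mrank m (μ₂ m) then μ₂ m else μ₁ m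

variable {μ₁ μ₂ : Equiv.Perm (Fin n)} {m : Fin n}

lemma better_of_le (h : I.mrank m (μ₁ m) ≤ I.mrank m (μ₂ m)) : I.better μ₁ μ₂ m = μ₁ m :=
  if_pos h

lemma better_of_not_le (h : ¬ I.mrank m (μ₁ m) ≤ I.mrank m (μ₂ m)) :
    I.better μ₁ μ₂ m = μ₂ m :=
  if_neg h

lemma worse_of_le (h : I.mrank m (μ₁ m) ≤ I.mrank m (μ₂ m)) : I.worse μ₁ μ₂ m = μ₂ m :=
  if_pos h

lemma worse_of_not_le (h : ¬ I.mrank m (μ₁ m) ≤ I.mrank m (μ₂ m)) :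
    I.worse μ₁ μ₂ m = μ₁ m :=
  if_neg h

lemma mrank_better :
    I.mrank m (I.better μ₁ μ₂ m) = min (I.mrank m (μ₁ m)) (I.mrank m (μ₂ m)) := by
  by_cases h : I.mrank m (μ₁ m) ≤ I.mrank m (μ₂ m)
  · rw [I.better_of_le h, min_eq_left h]
  · rw [I.better_of_not_le h, min_eq_right (le_of_not_ge h)]

lemma mrank_worse :
    I.mrank m (I.worse μ₁ μ₂ m) = max (I.mrank m (μ₁ m)) (I.mrank m (μ₂ m)) := by
  by_cases h : I.mrank m (μ₁ m) ≤ I.mrank m (μ₂ m)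
  · rw [I.worse_of_le h, max_eq_right h]
  · rw [I.worse_of_not_le h, max_eq_left (le_of_not_ge h)]

variable {I}

lemma eq_of_apply_eq_of_mrank_le (h₁ : I.Stable μ₁) (h₂ : I.Stable μ₂) {a b : Fin n}
    (hab : μ₁ a = μ₂ b) (ha : I.mrank a (μ₁ a) ≤ I.mrank a (μ₂ a))
    (hb : I.mrank b (μ₂ b) ≤ I.mrank b (μ₁ b)) : a = b := by
  have hwa : μ₁.symm (μ₁ a) = a := μ₁.symm_apply_apply a
  have hwb : μ₂.symm (μ₁ a) = b := by rw [hab, μ₂.symm_apply_apply]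
  rcases le_total (I.wrank (μ₁ a) a) (I.wrank (μ₁ a) b) with hw | hw
  · exact μ₂.injective ((h₂.apply_eq_of_le ha (by rwa [hwb])).trans hab)
  · exact (μ₁.injective (h₁.apply_eq_of_le (by rwa [hab]) (by rwa [hwa]))).symm

lemma better_injective (h₁ : I.Stable μ₁) (h₂ : I.Stable μ₂) :
    Function.Injective (I.better μ₁ μ₂) := by
  intro a b hab
  unfold better at hab
  split_ifs at hab with ha hb hb
  · exact μ₁.injective hab
  · exact eq_of_apply_eq_of_mrank_le h₁ h₂ hab ha (le_of_not_ge hb)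
  · exact (eq_of_apply_eq_of_mrank_le h₁ h₂ hab.symm hb (le_of_not_ge ha)).symm
  · exact μ₂.injective hab

noncomputable def join (h₁ : I.Stable μ₁) (h₂ : I.Stable μ₂) : Equiv.Perm (Fin n) :=
  Equiv.ofBijective _ (Finite.injective_iff_bijective.1 (better_injective h₁ h₂))

lemma join_apply (h₁ : I.Stable μ₁) (h₂ : I.Stable μ₂) (m : Fin n) :
    join h₁ h₂ m = I.better μ₁ μ₂ m := rfl

lemma stable_join (h₁ : I.Stable μ₁) (h₂ : I.Stable μ₂) : I.Stable (join h₁ h₂) := by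
  rw [stable_iff]
  rintro m w ⟨hm, hw⟩
  have hm' : I.better μ₁ μ₂ ((join h₁ h₂).symm w) = w := (join h₁ h₂).apply_symm_apply w
  rw [join_apply, mrank_better, lt_min_iff] at hm
  unfold better at hm'
  split_ifs at hm'
  · exact (I.stable_iff.1 h₁) m w ⟨hm.1, by rwa [μ₁.symm_apply_eq.2 hm'.symm]⟩
  · exact (I.stable_iff.1 h₂) m w ⟨hm.2, by rwa [μ₂.symm_apply_eq.2 hm'.symm]⟩

lemma dominates_join_iff (h₁ : I.Stable μ₁) (h₂ : I.Stable μ₂) {ν : Equiv.Perm (Fin n)} :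
    Dominates I ν (join h₁ h₂) ↔ Dominates I ν μ₁ ∧ Dominates I ν μ₂ := by
  simp only [Dominates, join_apply, mrank_better, le_min_iff, forall_and]

lemma worse_swap_join (h₁ : I.Stable μ₁) (h₂ : I.Stable μ₂) (w : Fin n) :
    I.worse μ₁ μ₂ (join h₁.swap_symm h₂.swap_symm w) = w := by
  rw [join_apply]
  by_cases hw : I.wrank w (μ₁.symm w) ≤ I.wrank w (μ₂.symm w)
  · rw [I.swap.better_of_le hw]
    obtain ⟨m, rfl⟩ := μ₁.surjective w
    rw [μ₁.symm_apply_apply] at hw ⊢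
    by_cases hm : I.mrank m (μ₁ m) ≤ I.mrank m (μ₂ m)
    · rw [I.worse_of_le hm]
      exact h₂.apply_eq_of_le hm hw
    · exact I.worse_of_not_le hm
  · rw [I.swap.better_of_not_le hw]
    obtain ⟨m, rfl⟩ := μ₂.surjective w
    rw [μ₂.symm_apply_apply] at hw ⊢
    by_cases hm : I.mrank m (μ₁ m) ≤ I.mrank m (μ₂ m)
    · exact I.worse_of_le hm
    · rw [I.worse_of_not_le hm]
      exact h₁.apply_eq_of_le (le_of_not_ge hm) (le_of_not_ge hw)

noncomputable def meet (h₁ : I.Stable μ₁) (h₂ : I.Stable μ₂) : Equiv.Perm (Fin n) :=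
  (join h₁.swap_symm h₂.swap_symm).symm

lemma meet_apply (h₁ : I.Stable μ₁) (h₂ : I.Stable μ₂) (m : Fin n) :
    meet h₁ h₂ m = I.worse μ₁ μ₂ m := by
  have := worse_swap_join h₁ h₂ (meet h₁ h₂ m)
  rwa [meet, Equiv.apply_symm_apply, eq_comm] at this

lemma stable_meet (h₁ : I.Stable μ₁) (h₂ : I.Stable μ₂) : I.Stable (meet h₁ h₂) :=
  I.stable_swap_symm_iff.1 (stable_join h₁.swap_symm h₂.swap_symm)

lemma meet_dominates_iff (h₁ : I.Stable μ₁) (h₂ : I.Stable μ₂) {ν : Equiv.Perm (Fin n)} :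
    Dominates I (meet h₁ h₂) ν ↔ Dominates I μ₁ ν ∧ Dominates I μ₂ ν := by
  simp only [Dominates, meet_apply, mrank_worse, max_le_iff, forall_and]

end SMInstance

/-- the set of stable matchings, ordered by men's dominance, forms
a lattice: every pair of stable matchings has a least upper bound and a greatest
lower bound within the set of stable matchings. -/
theorem stable_matchings_lattice {n : ℕ} (I : SMInstance n)
    (μ₁ μ₂ : Equiv.Perm (Fin n)) (h₁ : I.Stable μ₁) (h₂ : I.Stable μ₂) :
    (∃ σ : Equiv.Perm (Fin n), I.Stable σ ∧
        Dominates I σ μ₁ ∧ Dominates I σ μ₂ ∧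
        ∀ ν : Equiv.Perm (Fin n), I.Stable ν →
          Dominates I ν μ₁ → Dominates I ν μ₂ → Dominates I ν σ) ∧
      (∃ τ : Equiv.Perm (Fin n), I.Stable τ ∧
        Dominates I μ₁ τ ∧ Dominates I μ₂ τ ∧
        ∀ ν : Equiv.Perm (Fin n), I.Stable ν →
          Dominates I μ₁ ν → Dominates I μ₂ ν → Dominates I τ ν) := by
  open SMInstance in
  have hσ := (dominates_join_iff h₁ h₂).1 fun _ => le_rfl
  have hτ := (meet_dominates_iff h₁ h₂).1 fun _ => le_rfl
  exact ⟨⟨join h₁ h₂, stable_join h₁ h₂, hσ.1, hσ.2,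
      fun _ _ hν₁ hν₂ => (dominates_join_iff h₁ h₂).2 ⟨hν₁, hν₂⟩⟩,
    ⟨meet h₁ h₂, stable_meet h₁ h₂, hτ.1, hτ.2,
      fun _ _ hν₁ hν₂ => (meet_dominates_iff h₁ h₂).2 ⟨hν₁, hν₂⟩⟩⟩
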